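/- arXiv:2602.16022 — 4 statements merged into one kernel-verified Lean document; each statement's English description precedes it below -/
import Mathlib

section
/- Let γ ∈ C¹([0,∞)) be positive and decreasing, M = α·sup s̄, and assume sup_{[0,M]} |γ'(z)/γ(z)| ≤ μ/(M·sup s). Define m(u) = α s̄(x) u/(u+μ). Then for every x, the map u ↦ (s(x) − u)/γ(m(u)) is strictly decreasing on (0,∞); explicitly, its derivative equals γ(m(u))^{−2}·(−γ(m(u)) − (s(x)−u) γ'(m(u)) α s̄(x) μ/(u+μ)²) < 0. -/
/-!
Differentiating the quotient, the numerator of the derivative is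
`-γ(m) - (s - u) γ'(m) m'(u)`. For `u ≥ s` the second term is nonpositive because `γ' ≤ 0`.
For `u < s` the logarithmic-derivative bound gives `-γ'(m) ≤ γ(m) μ / (M sup s)`, while
`0 ≤ m'(u) = α s̄ μ / (u + μ)² ≤ M / μ` and `0 < s - u < sup s`, so the second term is
strictly less than `γ(m)`.
-/

open Set

lemma hasDerivAt_mul_div_add_const (k μ : ℝ) {u : ℝ} (hu : u + μ ≠ 0) :
    HasDerivAt (fun u : ℝ => k * u / (u + μ)) (k * μ / (u + μ) ^ 2) u :=
  (((hasDerivAt_id' u).const_mul k).div ((hasDerivAt_id' u).add_const μ) hu).congr_deriv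
    (by ring)

lemma mul_div_add_mem_Icc {k μ u : ℝ} (hk : 0 ≤ k) (hμ : 0 ≤ μ) (hu : 0 ≤ u) :
    k * u / (u + μ) ∈ Icc 0 k :=
  ⟨by positivity, div_le_of_le_mul₀ (by positivity) hk (by nlinarith)⟩

lemma mul_div_add_sq_le {k μ u : ℝ} (hk : 0 ≤ k) (hμ : 0 < μ) (hu : 0 ≤ u) :
    k * μ / (u + μ) ^ 2 ≤ k / μ := by
  rw [div_le_div_iff₀ (by positivity) hμ]
  have : μ ^ 2 ≤ (u + μ) ^ 2 := by gcongr; linarith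
  nlinarith

lemma hasDerivAt_sub_div_comp {γ m : ℝ → ℝ} {c u γ' m' : ℝ} (hγ : HasDerivAt γ γ' (m u))
    (hm : HasDerivAt m m' u) (hγm : γ (m u) ≠ 0) :
    HasDerivAt (fun u => (c - u) / γ (m u))
      ((γ (m u))⁻¹ ^ 2 * (-γ (m u) - (c - u) * γ' * m')) u :=
  (((hasDerivAt_id' u).const_sub c).div (hγ.comp u hm) hγm).congr_deriv
    (by simp only [Function.comp_apply]; field_simp)

lemma strictAntiOn_of_hasDerivAt_neg {D : Set ℝ} (hD : Convex ℝ D) (hDo : IsOpen D)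
    {f f' : ℝ → ℝ} (hf : ∀ x ∈ D, HasDerivAt f (f' x) x) (hf' : ∀ x ∈ D, f' x < 0) :
    StrictAntiOn f D := by
  refine strictAntiOn_of_hasDerivWithinAt_neg (f' := f') hD
    (fun x hx => (hf x hx).continuousAt.continuousWithinAt) (fun x hx => ?_) (fun x hx => ?_)
  all_goals rw [hDo.interior_eq] at *
  exacts [(hf x hx).hasDerivWithinAt, hf' x hx]

lemma neg_sub_mul_mul_neg {g g' p d c : ℝ} (hg : 0 < g) (hg' : g' ≤ 0) (hd : 0 ≤ d)
    (hc : |g' / g| ≤ c) (hpcd : 0 < p → p * c * d < 1) : -g - p * g' * d < 0 := by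
  rcases le_or_gt p 0 with hp | hp
  · nlinarith [mul_nonneg (mul_nonneg_of_nonpos_of_nonpos hp hg') hd]
  · have hlog : -g' ≤ g * c := by
      rwa [abs_div, abs_of_nonpos hg', abs_of_pos hg, div_le_iff₀ hg, mul_comm] at hc
    calc -g - p * g' * d = p * -g' * d - g := by ring
      _ ≤ p * (g * c) * d - g := by gcongr
      _ = g * (p * c * d - 1) := by ring
      _ < 0 := mul_neg_of_pos_of_neg hg (by linarith [hpcd hp])

lemma mul_div_mul_mul_lt_one {p μ M S d : ℝ} (hμ : 0 < μ) (hM : 0 < M) (hp : 0 < p)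
    (hpS : p < S) (hd : d ≤ M / μ) : p * (μ / (M * S)) * d < 1 := by
  have hS : 0 < S := hp.trans hpS
  calc p * (μ / (M * S)) * d ≤ p * (μ / (M * S)) * (M / μ) := by gcongr
    _ = p / S := by field_simp
    _ < 1 := (div_lt_one hS).2 hpS

theorem stmt_10_general {n : ℕ} (Ω : Set (EuclideanSpace ℝ (Fin n)))
    (α μ S Ssup M : ℝ) (hα : 0 < α) (hμ : 0 < μ)
    (s sbar : EuclideanSpace ℝ (Fin n) → ℝ)
    (hsbp : ∀ x ∈ Ω, 0 < sbar x)
    (hsS : ∀ x ∈ Ω, sbar x ≤ S)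
    (hssup : ∀ x ∈ Ω, s x ≤ Ssup)
    (hM : M = α * S)
    (γ γ' : ℝ → ℝ)
    (hγd : ∀ z, 0 ≤ z → HasDerivAt γ (γ' z) z)
    (hγpos : ∀ z, 0 ≤ z → 0 < γ z)
    (hγ'np : ∀ z, 0 ≤ z → γ' z ≤ 0)
    (hbound : ∀ z ∈ Set.Icc (0:ℝ) M, |γ' z / γ z| ≤ μ / (M * Ssup)) :
    ∀ x ∈ Ω,
      StrictAntiOn (fun u : ℝ => (s x - u) / γ (α * sbar x * u / (u + μ))) (Set.Ioi 0) ∧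
      ∀ u : ℝ, 0 < u →
        HasDerivAt (fun u : ℝ => (s x - u) / γ (α * sbar x * u / (u + μ)))
          ((γ (α * sbar x * u / (u + μ)))⁻¹ ^ 2 *
            (-γ (α * sbar x * u / (u + μ)) -
              (s x - u) * γ' (α * sbar x * u / (u + μ)) *
                (α * sbar x * μ / (u + μ) ^ 2))) u ∧
        (γ (α * sbar x * u / (u + μ)))⁻¹ ^ 2 *
            (-γ (α * sbar x * u / (u + μ)) -
              (s x - u) * γ' (α * sbar x * u / (u + μ)) *
                (α * sbar x * μ / (u + μ) ^ 2)) < 0 := by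
  intro x hx
  have hk : 0 < α * sbar x := mul_pos hα (hsbp x hx)
  have hkM : α * sbar x ≤ M := hM ▸ mul_le_mul_of_nonneg_left (hsS x hx) hα.le
  refine (and_iff_right_of_imp fun hderiv => strictAntiOn_of_hasDerivAt_neg (convex_Ioi 0)
    isOpen_Ioi (fun u hu => (hderiv u hu).1) (fun u hu => (hderiv u hu).2)).2 fun u hu => ?_
  have huμ : 0 < u + μ := by linarith
  obtain ⟨hm₀, hmk⟩ := mul_div_add_mem_Icc hk.le hμ.le hu.le
  have hγm := hγpos _ hm₀
  have hd := (mul_div_add_sq_le hk.le hμ hu.le).trans (div_le_div_of_nonneg_right hkM hμ.le)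
  refine ⟨hasDerivAt_sub_div_comp (hγd _ hm₀) (hasDerivAt_mul_div_add_const _ _ huμ.ne')
    hγm.ne', mul_neg_of_pos_of_neg (by positivity) ?_⟩
  refine neg_sub_mul_mul_neg hγm (hγ'np _ hm₀) (by positivity)
    (hbound _ ⟨hm₀, hmk.trans hkM⟩) fun hp => ?_
  exact mul_div_mul_mul_lt_one hμ (hk.trans_le hkM) hp (by linarith [hssup x hx]) hd

theorem stmt_10 {n : ℕ} (Ω : Set (EuclideanSpace ℝ (Fin n)))
    (α μ S Ssup M : ℝ) (hα : 0 < α) (hμ : 0 < μ)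
    (s sbar : EuclideanSpace ℝ (Fin n) → ℝ)
    (hsp : ∀ x ∈ Ω, 0 < s x) (hsbp : ∀ x ∈ Ω, 0 < sbar x)
    (hsS : ∀ x ∈ Ω, sbar x ≤ S) (hSatt : ∃ x ∈ Ω, sbar x = S)
    (hssup : ∀ x ∈ Ω, s x ≤ Ssup) (hSsupatt : ∃ x ∈ Ω, s x = Ssup)
    (hM : M = α * S)
    (γ γ' : ℝ → ℝ)
    (hγd : ∀ z, 0 ≤ z → HasDerivAt γ (γ' z) z)
    (hγpos : ∀ z, 0 ≤ z → 0 < γ z)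
    (hγ'np : ∀ z, 0 ≤ z → γ' z ≤ 0)
    (hbound : ∀ z ∈ Set.Icc (0:ℝ) M, |γ' z / γ z| ≤ μ / (M * Ssup)) :
    ∀ x ∈ Ω,
      StrictAntiOn (fun u : ℝ => (s x - u) / γ (α * sbar x * u / (u + μ))) (Set.Ioi 0) ∧
      ∀ u : ℝ, 0 < u →
        HasDerivAt (fun u : ℝ => (s x - u) / γ (α * sbar x * u / (u + μ)))
          ((γ (α * sbar x * u / (u + μ)))⁻¹ ^ 2 *
            (-γ (α * sbar x * u / (u + μ)) -
              (s x - u) * γ' (α * sbar x * u / (u + μ)) *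
                (α * sbar x * μ / (u + μ) ^ 2))) u ∧
        (γ (α * sbar x * u / (u + μ)))⁻¹ ^ 2 *
            (-γ (α * sbar x * u / (u + μ)) -
              (s x - u) * γ' (α * sbar x * u / (u + μ)) *
                (α * sbar x * μ / (u + μ) ^ 2)) < 0 :=
  stmt_10_general Ω α μ S Ssup M hα hμ s sbar hsbp hsS hssup hM γ γ' hγd hγpos hγ'np hbound
end

section
/- Let γ₀, ℓ > 0 and s ∈ C¹([−ℓ, ℓ]) be even and strictly decreasing on (0, ℓ). Suppose v ∈ C²([−ℓ, ℓ]) is an even positive solution of γ₀ v'' + v(s − v) = 0 with v'(±ℓ) = 0 and v is strictly increasing on (0, ℓ). Then v(0) ≥ s(0) and v(ℓ) ≤ s(ℓ), which contradicts s(ℓ) < s(0); hence there exists x ∈ (0, ℓ) with v'(x) ≤ 0. -/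
/-!
If v' > 0 on (0, ℓ), then v' vanishes at 0 (v is even) and at ℓ and is positive in between, so
v''(0) ≥ 0 ≥ v''(ℓ). Dividing the equation by v > 0 turns these into v(0) ≥ s(0) and
v(ℓ) ≤ s(ℓ), whence v(ℓ) ≤ s(ℓ) < s(0) ≤ v(0) < v(ℓ).
-/

open Set Filter Topology

theorem StrictAntiOn.apply_lt_apply_of_continuousOn_Icc {α β : Type*} [TopologicalSpace α]
    [LinearOrder α] [OrderTopology α] [DenselyOrdered α] [TopologicalSpace β] [LinearOrder β]
    [OrderClosedTopology β] {f : α → β} {a b : α} (hab : a < b) (hf : StrictAntiOn f (Ioo a b))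
    (hfc : ContinuousOn f (Icc a b)) : f b < f a := by
  obtain ⟨c, hac, hcb⟩ := exists_between hab
  obtain ⟨d, hcd, hdb⟩ := exists_between hcb
  have := nhdsGT_neBot_of_exists_gt ⟨b, hab⟩
  have := nhdsLT_neBot_of_exists_lt ⟨a, hab⟩
  have hfa : f c ≤ f a := by
    refine ge_of_tendsto ((hfc a (left_mem_Icc.2 hab.le)).mono_of_mem_nhdsWithin
      (Icc_mem_nhdsGT hab)) ?_
    filter_upwards [Ioo_mem_nhdsGT hac] with x hx
    exact (hf ⟨hx.1, hx.2.trans hcb⟩ ⟨hac, hcb⟩ hx.2).le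
  have hfb : f b ≤ f d := by
    refine le_of_tendsto ((hfc b (right_mem_Icc.2 hab.le)).mono_of_mem_nhdsWithin
      (Icc_mem_nhdsLT hab)) ?_
    filter_upwards [Ioo_mem_nhdsLT hdb] with x hx
    exact (hf ⟨hac.trans hcd, hdb⟩ ⟨hac.trans (hcd.trans hx.1), hx.2⟩ hx.1).le
  calc f b ≤ f d := hfb
    _ < f c := hf ⟨hac, hcb⟩ ⟨hac.trans hcd, hdb⟩ hcd
    _ ≤ f a := hfa

theorem deriv_zero_of_even {E : Type*} [NormedAddCommGroup E] [NormedSpace ℝ E] {f : ℝ → E}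
    (hf : ∀ x, f (-x) = f x) : deriv f 0 = 0 := by
  have h := deriv_comp_neg f 0
  rw [funext hf, neg_zero] at h
  have h2 : (2 : ℝ) • deriv f 0 = 0 := by
    rw [two_smul]
    nth_rewrite 1 [h]
    exact neg_add_cancel _
  exact (smul_eq_zero.mp h2).resolve_left two_ne_zero

theorem HasDerivAt.nonneg_of_eventually_nhdsGT_ge {f : ℝ → ℝ} {f' a : ℝ}
    (hf : HasDerivAt f f' a) (h : ∀ᶠ x in 𝓝[>] a, f a ≤ f x) : 0 ≤ f' := by
  refine ge_of_tendsto (hasDerivAt_iff_tendsto_slope_left_right.mp hf).2 ?_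
  filter_upwards [h, self_mem_nhdsWithin] with x hfx (hx : a < x)
  rw [slope_def_field]
  exact div_nonneg (sub_nonneg.2 hfx) (sub_pos.2 hx).le

theorem HasDerivAt.nonpos_of_eventually_nhdsLT_ge {f : ℝ → ℝ} {f' a : ℝ}
    (hf : HasDerivAt f f' a) (h : ∀ᶠ x in 𝓝[<] a, f a ≤ f x) : f' ≤ 0 := by
  refine le_of_tendsto (hasDerivAt_iff_tendsto_slope_left_right.mp hf).1 ?_
  filter_upwards [h, self_mem_nhdsWithin] with x hfx (hx : x < a)
  rw [slope_def_field]
  exact div_nonpos_of_nonneg_of_nonpos (sub_nonneg.2 hfx) (sub_neg.2 hx).le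

theorem stmt_13_general (γ0 ℓ : ℝ) (hγ0 : 0 < γ0) (hℓ : 0 < ℓ)
    (s : ℝ → ℝ) (hs : ContDiff ℝ 1 s)
    (hsdec : StrictAntiOn s (Set.Ioo 0 ℓ))
    (v : ℝ → ℝ) (hv : ContDiff ℝ 2 v)
    (hveven : ∀ x, v (-x) = v x)
    (hveq : ∀ x ∈ Set.Icc (-ℓ) ℓ, γ0 * deriv (deriv v) x + v x * (s x - v x) = 0)
    (hvbcr : deriv v ℓ = 0)
    (hvpos : ∀ x ∈ Set.Icc (-ℓ) ℓ, 0 < v x) :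
    ∃ x ∈ Set.Ioo 0 ℓ, deriv v x ≤ 0 := by
  by_contra! hv'pos
  have hv'' : Differentiable ℝ (deriv v) := hv.differentiable_deriv_two
  have hmin : 0 ≤ deriv (deriv v) 0 := by
    refine (hv'' 0).hasDerivAt.nonneg_of_eventually_nhdsGT_ge ?_
    filter_upwards [Ioo_mem_nhdsGT hℓ] with x hx
    rw [deriv_zero_of_even hveven]
    exact (hv'pos x hx).le
  have hmax : deriv (deriv v) ℓ ≤ 0 := by
    refine (hv'' ℓ).hasDerivAt.nonpos_of_eventually_nhdsLT_ge ?_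
    filter_upwards [Ioo_mem_nhdsLT hℓ] with x hx
    rw [hvbcr]
    exact (hv'pos x hx).le
  have hv_lt : v 0 < v ℓ := by
    refine strictMonoOn_of_deriv_pos (convex_Icc 0 ℓ) hv.continuous.continuousOn ?_
      (left_mem_Icc.2 hℓ.le) (right_mem_Icc.2 hℓ.le) hℓ
    rwa [interior_Icc]
  have hs_lt : s ℓ < s 0 :=
    hsdec.apply_lt_apply_of_continuousOn_Icc hℓ hs.continuous.continuousOn
  have h0mem : (0 : ℝ) ∈ Icc (-ℓ) ℓ := ⟨by linarith, hℓ.le⟩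
  have hℓmem : ℓ ∈ Icc (-ℓ) ℓ := ⟨by linarith, le_rfl⟩
  have hs_le_v : s 0 ≤ v 0 := by nlinarith [hveq 0 h0mem, hvpos 0 h0mem]
  have hv_le_s : v ℓ ≤ s ℓ := by nlinarith [hveq ℓ hℓmem, hvpos ℓ hℓmem]
  linarith

theorem stmt_13 (γ0 ℓ : ℝ) (hγ0 : 0 < γ0) (hℓ : 0 < ℓ)
    (s : ℝ → ℝ) (hs : ContDiff ℝ 1 s) (hseven : ∀ x, s (-x) = s x)
    (hsdec : StrictAntiOn s (Set.Ioo 0 ℓ))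
    (v : ℝ → ℝ) (hv : ContDiff ℝ 2 v)
    (hveven : ∀ x, v (-x) = v x)
    (hveq : ∀ x ∈ Set.Icc (-ℓ) ℓ, γ0 * deriv (deriv v) x + v x * (s x - v x) = 0)
    (hvbcl : deriv v (-ℓ) = 0) (hvbcr : deriv v ℓ = 0)
    (hvpos : ∀ x ∈ Set.Icc (-ℓ) ℓ, 0 < v x) :
    ∃ x ∈ Set.Ioo 0 ℓ, deriv v x ≤ 0 :=
  stmt_13_general γ0 ℓ hγ0 hℓ s hs hsdec v hv hveven hveq hvbcr hvpos
end

section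
/- Let γ₀, ℓ > 0 and let s ∈ C¹([−ℓ, ℓ]) be even and strictly decreasing on (0, ℓ). If v ∈ C²([−ℓ, ℓ]) (with v'' of class C¹) is the unique positive solution of γ₀ v'' + v(s − v) = 0 on (−ℓ, ℓ) with v'(−ℓ) = v'(ℓ) = 0, then v is even and nonincreasing on [0, ℓ]; in particular v attains its maximum at x = 0. -/
/-!
Reflecting a solution, `x ↦ v (-x)`, gives again a positive solution because `s` is even, so
uniqueness makes `v` even and in particular `v'(0) = 0`. If `v'` were positive somewhere on
`[0, ℓ]`, its maximum there would be attained at an interior point `x₀`; there `v'''(x₀) ≤ 0`,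
and `v''(x₀) = 0` forces `v(x₀) = s(x₀)`. Differentiating the equation then gives
`γ₀ v'''(x₀) = v(x₀) (v'(x₀) - s'(x₀)) > 0`, since `s' ≤ 0` on `(0, ℓ)`.
-/

open Set Filter Topology

theorem IsLocalMax.deriv_deriv_nonpos {f : ℝ → ℝ} {a : ℝ} (h : IsLocalMax f a)
    (hc : ContinuousAt f a) : deriv (deriv f) a ≤ 0 := by
  by_contra! hpos
  -- Else the second-derivative test makes `a` a local minimum too: `f` is locally constant.
  have hconst : f =ᶠ[𝓝 a] fun _ => f a :=
    (h.and (isLocalMin_of_deriv_deriv_pos hpos h.deriv_eq_zero hc)).mono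
      fun _ hx => le_antisymm hx.1 hx.2
  have h2 := hconst.deriv.deriv_eq
  simp only [deriv_const', deriv_const] at h2
  exact hpos.ne' h2

theorem AntitoneOn.deriv_nonpos_of_isOpen {g : ℝ → ℝ} {U : Set ℝ} {x : ℝ}
    (hg : AntitoneOn g U) (hU : IsOpen U) (hx : x ∈ U) : deriv g x ≤ 0 := by
  rw [← derivWithin_of_isOpen hU hx]
  exact hg.derivWithin_nonpos

theorem deriv_eq_zero_of_eventually_even {f : ℝ → ℝ} (h : ∀ᶠ x in 𝓝 0, f (-x) = f x) :
    deriv f 0 = 0 := by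
  have hf : f =ᶠ[𝓝 0] fun x => f (-x) := h.mono fun _ hx => hx.symm
  have h1 : deriv f 0 = -deriv f (-0) := hf.deriv_eq.trans (deriv_comp_neg f 0)
  rw [neg_zero] at h1
  linarith

theorem deriv_deriv_comp_neg (f : ℝ → ℝ) (x : ℝ) :
    deriv (deriv fun y => f (-y)) x = deriv (deriv f) (-x) := by
  have h1 : deriv (fun y => f (-y)) = fun y => -deriv f (-y) :=
    funext fun y => deriv_comp_neg f y
  rw [h1, deriv.fun_neg, deriv_comp_neg, neg_neg]

def IsPosNeumannSolution (γ ℓ : ℝ) (s w : ℝ → ℝ) : Prop :=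
  ContDiff ℝ 2 w ∧ (∀ x ∈ Icc (-ℓ) ℓ, γ * deriv (deriv w) x + w x * (s x - w x) = 0) ∧
    deriv w (-ℓ) = 0 ∧ deriv w ℓ = 0 ∧ ∀ x ∈ Icc (-ℓ) ℓ, 0 < w x

namespace IsPosNeumannSolution

variable {γ ℓ : ℝ} {s v : ℝ → ℝ}

theorem comp_neg (hs : ∀ x, s (-x) = s x) (hv : IsPosNeumannSolution γ ℓ s v) :
    IsPosNeumannSolution γ ℓ s fun x => v (-x) := by
  obtain ⟨hv2, heq, hl, hr, hpos⟩ := hv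
  have hmem : ∀ x ∈ Icc (-ℓ) ℓ, -x ∈ Icc (-ℓ) ℓ := fun x hx =>
    ⟨neg_le_neg hx.2, by linarith [hx.1]⟩
  refine ⟨hv2.comp contDiff_neg, fun x hx => ?_, ?_, ?_, fun x hx => hpos (-x) (hmem x hx)⟩
  · rw [deriv_deriv_comp_neg, ← hs x]
    exact heq (-x) (hmem x hx)
  · rw [deriv_comp_neg, neg_neg, hr, neg_zero]
  · rw [deriv_comp_neg, hl, neg_zero]

theorem deriv_equation {x : ℝ} (hv : IsPosNeumannSolution γ ℓ s v) (hx : x ∈ Ioo (-ℓ) ℓ)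
    (hs : DifferentiableAt ℝ s x) (hv'' : DifferentiableAt ℝ (deriv (deriv v)) x) :
    γ * deriv (deriv (deriv v)) x + (deriv v x * (s x - v x) + v x * (deriv s x - deriv v x))
      = 0 := by
  have hvx : DifferentiableAt ℝ v x := (hv.1.differentiable two_ne_zero) x
  have hF : HasDerivAt (fun y => γ * deriv (deriv v) y + v y * (s y - v y))
      (γ * deriv (deriv (deriv v)) x +
        (deriv v x * (s x - v x) + v x * (deriv s x - deriv v x))) x :=
    (hv''.hasDerivAt.const_mul γ).add
      (hvx.hasDerivAt.mul (hs.hasDerivAt.sub hvx.hasDerivAt))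
  have hzero : (fun y => γ * deriv (deriv v) y + v y * (s y - v y)) =ᶠ[𝓝 x] fun _ => 0 :=
    eventually_of_mem (Icc_mem_nhds hx.1 hx.2) hv.2.1
  exact hF.unique ((hasDerivAt_const x (0 : ℝ)).congr_of_eventuallyEq hzero)

theorem deriv_nonpos (hγ : 0 < γ) (hs : Differentiable ℝ s) (hsdec : StrictAntiOn s (Ioo 0 ℓ))
    (hv : IsPosNeumannSolution γ ℓ s v) (hv'' : Differentiable ℝ (deriv (deriv v)))
    (h0 : deriv v 0 = 0) : ∀ x ∈ Icc 0 ℓ, deriv v x ≤ 0 := by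
  obtain ⟨hv2, heq, -, hr, hvpos⟩ := id hv
  by_contra! ⟨z, hz, hzpos⟩
  have hv' : Continuous (deriv v) := hv2.continuous_deriv one_le_two
  obtain ⟨x₀, hx₀, hmax⟩ := isCompact_Icc.exists_isMaxOn ⟨z, hz⟩ hv'.continuousOn
  have hpos : 0 < deriv v x₀ := hzpos.trans_le (hmax hz)
  have hx₀' : x₀ ∈ Ioo 0 ℓ :=
    ⟨hx₀.1.lt_of_ne (by rintro rfl; linarith),
      hx₀.2.lt_of_ne (by rintro rfl; linarith)⟩
  have hx₀'' : x₀ ∈ Ioo (-ℓ) ℓ := ⟨by linarith [hx₀'.1, hx₀'.2], hx₀'.2⟩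
  have hlocmax : IsLocalMax (deriv v) x₀ := hmax.isLocalMax (Icc_mem_nhds hx₀'.1 hx₀'.2)
  have hvx : 0 < v x₀ := hvpos x₀ (Ioo_subset_Icc_self hx₀'')
  have hsv : s x₀ = v x₀ := by
    have h := heq x₀ (Ioo_subset_Icc_self hx₀'')
    rw [hlocmax.deriv_eq_zero, mul_zero, zero_add, mul_eq_zero] at h
    exact sub_eq_zero.1 (h.resolve_left hvx.ne')
  have hv''' : deriv (deriv (deriv v)) x₀ ≤ 0 := hlocmax.deriv_deriv_nonpos hv'.continuousAt
  have hs' : deriv s x₀ ≤ 0 := hsdec.antitoneOn.deriv_nonpos_of_isOpen isOpen_Ioo hx₀'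
  have hdiff := hv.deriv_equation hx₀'' (hs x₀) (hv'' x₀)
  rw [hsv, sub_self, mul_zero, zero_add] at hdiff
  have hγv''' : 0 < γ * deriv (deriv (deriv v)) x₀ := by
    linarith [mul_pos hvx (by linarith : 0 < deriv v x₀ - deriv s x₀)]
  exact hγv'''.not_ge (mul_nonpos_of_nonneg_of_nonpos hγ.le hv''')

end IsPosNeumannSolution

theorem stmt_14 (γ0 ℓ : ℝ) (hγ0 : 0 < γ0) (hℓ : 0 < ℓ)
    (s : ℝ → ℝ) (hs : ContDiff ℝ 1 s) (hseven : ∀ x, s (-x) = s x)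
    (hsdec : StrictAntiOn s (Set.Ioo 0 ℓ))
    (v : ℝ → ℝ) (hv : ContDiff ℝ 2 v) (hv'' : ContDiff ℝ 1 (deriv (deriv v)))
    (hveq : ∀ x ∈ Set.Icc (-ℓ) ℓ, γ0 * deriv (deriv v) x + v x * (s x - v x) = 0)
    (hvbcl : deriv v (-ℓ) = 0) (hvbcr : deriv v ℓ = 0)
    (hvpos : ∀ x ∈ Set.Icc (-ℓ) ℓ, 0 < v x)
    (huniq : ∀ w : ℝ → ℝ, ContDiff ℝ 2 w →
      (∀ x ∈ Set.Icc (-ℓ) ℓ, γ0 * deriv (deriv w) x + w x * (s x - w x) = 0) →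
      deriv w (-ℓ) = 0 → deriv w ℓ = 0 →
      (∀ x ∈ Set.Icc (-ℓ) ℓ, 0 < w x) →
      ∀ x ∈ Set.Icc (-ℓ) ℓ, w x = v x) :
    (∀ x ∈ Set.Icc (-ℓ) ℓ, v (-x) = v x) ∧
    AntitoneOn v (Set.Icc 0 ℓ) ∧
    ∀ x ∈ Set.Icc (-ℓ) ℓ, v x ≤ v 0 := by
  have hsol : IsPosNeumannSolution γ0 ℓ s v := ⟨hv, hveq, hvbcl, hvbcr, hvpos⟩
  have heven : ∀ x ∈ Icc (-ℓ) ℓ, v (-x) = v x := by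
    obtain ⟨h2, heq, hl, hr, hpos⟩ := hsol.comp_neg hseven
    exact huniq _ h2 heq hl hr hpos
  have hv0 : deriv v 0 = 0 :=
    deriv_eq_zero_of_eventually_even
      (eventually_of_mem (Icc_mem_nhds (neg_lt_zero.2 hℓ) hℓ) heven)
  have hvdiff : Differentiable ℝ v := hv.differentiable two_ne_zero
  have hanti : AntitoneOn v (Icc 0 ℓ) :=
    antitoneOn_of_deriv_nonpos (convex_Icc 0 ℓ) hvdiff.continuous.continuousOn
      hvdiff.differentiableOn fun x hx =>
        hsol.deriv_nonpos hγ0 (hs.differentiable one_ne_zero) hsdec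
          (hv''.differentiable one_ne_zero) hv0 x (interior_subset hx)
  refine ⟨heven, hanti, fun x hx => ?_⟩
  have h0 : (0 : ℝ) ∈ Icc 0 ℓ := left_mem_Icc.2 hℓ.le
  rcases le_total 0 x with hx0 | hx0
  · exact hanti h0 ⟨hx0, hx.2⟩ hx0
  · rw [← heven x hx]
    exact hanti h0 ⟨neg_nonneg.2 hx0, by linarith [hx.1]⟩ (neg_nonneg.2 hx0)
end

section
/- Let γ₀, ℓ > 0, s ∈ C²([−ℓ, ℓ]) even, positive, decreasing on (0, ℓ), with s''(0) < 0. If u₀ ∈ C²([−ℓ, ℓ]) is a positive even solution of γ₀ u₀'' + u₀(s − u₀) = 0 with u₀'(±ℓ) = 0 that attains its maximum at x = 0, then u₀(0) < s(0). -/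
/-!
Suppose `s 0 ≤ u₀ 0`. Then `u₀ > s` on some interval `(0, δ)`: by continuity if the inequality is
strict, and otherwise because `z = u₀ - s` has `z 0 = z' 0 = 0` and `z'' 0 = -s'' 0 > 0` (the
equation forces `u₀'' 0 = 0`). On `(0, δ)` the equation gives `γ₀ u₀'' = u₀ (u₀ - s) > 0`, so,
as `u₀' 0 = 0` by evenness, `u₀` strictly increases to the right of `0`, contradicting the
maximum at `0`.
-/

open Set Filter Topology

lemma Function.Even.deriv_zero {f : ℝ → ℝ} (hf : Function.Even f) : deriv f 0 = 0 := by
  have h := deriv_comp_neg f (x := 0)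
  rw [show (fun x => f (-x)) = f from funext hf, neg_zero] at h
  linarith

lemma eventually_lt_of_deriv_eq_zero_of_deriv_deriv_pos {f : ℝ → ℝ} {a : ℝ}
    (hf : Continuous f) (hf' : Continuous (deriv f)) (ha : deriv f a = 0)
    (h : ∀ᶠ x in 𝓝[>] a, 0 < deriv (deriv f) x) : ∀ᶠ x in 𝓝[>] a, f a < f x := by
  obtain ⟨b, hab, hb⟩ := mem_nhdsGT_iff_exists_Ioo_subset.1 h
  have hmono' : StrictMonoOn (deriv f) (Icc a b) :=
    strictMonoOn_of_deriv_pos (convex_Icc a b) hf'.continuousOn (by rwa [interior_Icc])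
  have hpos' : ∀ x ∈ Ioo a b, 0 < deriv f x := fun x hx =>
    ha ▸ hmono' (left_mem_Icc.2 hab.le) (Ioo_subset_Icc_self hx) hx.1
  have hmono : StrictMonoOn f (Icc a b) :=
    strictMonoOn_of_deriv_pos (convex_Icc a b) hf.continuousOn (by rwa [interior_Icc])
  filter_upwards [Ioo_mem_nhdsGT hab] with x hx
  exact hmono (left_mem_Icc.2 hab.le) (Ioo_subset_Icc_self hx) hx.1

lemma ContDiff.continuous_deriv_deriv {f : ℝ → ℝ} (hf : ContDiff ℝ 2 f) :
    Continuous (deriv (deriv f)) :=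
  (contDiff_succ_iff_deriv.mp hf).2.2.continuous_deriv_one

lemma deriv_deriv_sub {f g : ℝ → ℝ} (hf : ContDiff ℝ 2 f) (hg : ContDiff ℝ 2 g) (x : ℝ) :
    deriv (deriv (f - g)) x = deriv (deriv f) x - deriv (deriv g) x := by
  have hfg : deriv (f - g) = deriv f - deriv g := funext fun y =>
    deriv_sub (hf.differentiable (by norm_num) y) (hg.differentiable (by norm_num) y)
  rw [hfg]
  exact deriv_sub (hf.differentiable_deriv_two x) (hg.differentiable_deriv_two x)

lemma eventually_lt_of_deriv_eq_of_deriv_deriv_lt {f g : ℝ → ℝ} {a : ℝ} (hf : ContDiff ℝ 2 f)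
    (hg : ContDiff ℝ 2 g) (h₀ : f a = g a) (h₁ : deriv f a = deriv g a)
    (h₂ : deriv (deriv f) a < deriv (deriv g) a) : ∀ᶠ x in 𝓝[>] a, f x < g x := by
  have hz : ContDiff ℝ 2 (g - f) := hg.sub hf
  have hz' : deriv (g - f) a = 0 := by
    rw [deriv_sub (hg.differentiable (by norm_num) a) (hf.differentiable (by norm_num) a), h₁,
      sub_self]
  have hz'' : ∀ᶠ x in 𝓝[>] a, 0 < deriv (deriv (g - f)) x := by
    have ha : 0 < deriv (deriv (g - f)) a := by rw [deriv_deriv_sub hg hf]; linarith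
    exact (hz.continuous_deriv_deriv.continuousAt.eventually (lt_mem_nhds ha)).filter_mono
      nhdsWithin_le_nhds
  filter_upwards [eventually_lt_of_deriv_eq_zero_of_deriv_deriv_pos hz.continuous
    (hz.continuous_deriv (by norm_num)) hz' hz''] with x hx
  simpa only [Pi.sub_apply, h₀, sub_self, sub_pos] using hx

theorem stmt_15_general (γ0 ℓ : ℝ) (hγ0 : 0 < γ0) (hℓ : 0 < ℓ)
    (s : ℝ → ℝ) (hs : ContDiff ℝ 2 s) (hseven : ∀ x, s (-x) = s x)
    (hs'' : deriv (deriv s) 0 < 0)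
    (u0 : ℝ → ℝ) (hu0 : ContDiff ℝ 2 u0)
    (hu0even : ∀ x, u0 (-x) = u0 x)
    (hu0pos : ∀ x ∈ Set.Icc (-ℓ) ℓ, 0 < u0 x)
    (hu0eq : ∀ x ∈ Set.Icc (-ℓ) ℓ, γ0 * deriv (deriv u0) x + u0 x * (s x - u0 x) = 0)
    (hmax : ∀ x ∈ Set.Icc (-ℓ) ℓ, u0 x ≤ u0 0) :
    u0 0 < s 0 := by
  have hd0 : deriv u0 0 = 0 := Function.Even.deriv_zero hu0even
  by_contra! hcon
  have hgap : ∀ᶠ x in 𝓝[>] 0, s x < u0 x := by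
    rcases hcon.lt_or_eq with hlt | heq
    · exact (hs.continuous.continuousAt.eventually_lt hu0.continuous.continuousAt hlt).filter_mono
        nhdsWithin_le_nhds
    have hu0''0 : deriv (deriv u0) 0 = 0 := by
      have h0 := hu0eq 0 ⟨by linarith, hℓ.le⟩
      rw [heq, sub_self, mul_zero, add_zero] at h0
      exact (mul_eq_zero.1 h0).resolve_left hγ0.ne'
    exact eventually_lt_of_deriv_eq_of_deriv_deriv_lt hs hu0 heq
      (by rw [Function.Even.deriv_zero hseven, hd0]) (by linarith)
  have hconvex : ∀ᶠ x in 𝓝[>] 0, 0 < deriv (deriv u0) x := by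
    filter_upwards [hgap, Ioo_mem_nhdsGT hℓ] with x hsx hx
    have hxI : x ∈ Icc (-ℓ) ℓ := ⟨by linarith [hx.1], hx.2.le⟩
    have : 0 < γ0 * deriv (deriv u0) x := by
      linarith [hu0eq x hxI, mul_pos (hu0pos x hxI) (sub_pos.2 hsx)]
    exact pos_of_mul_pos_right this hγ0.le
  obtain ⟨x, hx, hlt⟩ := (Filter.Eventually.and (Ioo_mem_nhdsGT hℓ)
    (eventually_lt_of_deriv_eq_zero_of_deriv_deriv_pos hu0.continuous
      (hu0.continuous_deriv (by norm_num)) hd0 hconvex)).exists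
  exact (hmax x ⟨by linarith [hx.1], hx.2.le⟩).not_gt hlt

theorem stmt_15 (γ0 ℓ : ℝ) (hγ0 : 0 < γ0) (hℓ : 0 < ℓ)
    (s : ℝ → ℝ) (hs : ContDiff ℝ 2 s) (hseven : ∀ x, s (-x) = s x)
    (hspos : ∀ x ∈ Set.Icc (-ℓ) ℓ, 0 < s x)
    (hsdec : StrictAntiOn s (Set.Ioo 0 ℓ))
    (hs'' : deriv (deriv s) 0 < 0)
    (u0 : ℝ → ℝ) (hu0 : ContDiff ℝ 2 u0)
    (hu0even : ∀ x, u0 (-x) = u0 x)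
    (hu0pos : ∀ x ∈ Set.Icc (-ℓ) ℓ, 0 < u0 x)
    (hu0eq : ∀ x ∈ Set.Icc (-ℓ) ℓ, γ0 * deriv (deriv u0) x + u0 x * (s x - u0 x) = 0)
    (hbcl : deriv u0 (-ℓ) = 0) (hbcr : deriv u0 ℓ = 0)
    (hmax : ∀ x ∈ Set.Icc (-ℓ) ℓ, u0 x ≤ u0 0) :
    u0 0 < s 0 :=
  stmt_15_general γ0 ℓ hγ0 hℓ s hs hseven hs'' u0 hu0 hu0even hu0pos hu0eq hmax
end
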